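/- Reduced words of the diagram D = [{1}, {2}] (one box in row 1 column 1, one box in row 2 column 2) are exactly (1,1) and (1,2); in particular, the set of reduced words of a diagram is not connected under commutation and braid moves. -/
import Mathlib


/-- Column `j` of the diagram `D` witnesses a descent at `k`: the largest row index
in column `j` is `k`, and every other column is either `k`-full (a box in row `k`
implies a box in row `k+1`, so it may be placed to the left) or has its intersection
with rows `{1,…,k+1}` contained in column `j` (so it may be placed to the right). -/
def IsDescentCol (D : Set (ℕ+ × ℕ+)) (k j : ℕ+) : Prop :=
  (k, j) ∈ D ∧ (∀ i : ℕ+, (i, j) ∈ D → i ≤ k) ∧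
    ∀ j' : ℕ+, j' ≠ j →
      (((k, j') ∈ D → (k + 1, j') ∈ D) ∨
        ∀ i : ℕ+, (i, j') ∈ D → i ≤ k + 1 → (i, j) ∈ D)

/-- Swapping rows `k` and `k+1` of a diagram. -/
def swapRows (k : ℕ+) (D : Set (ℕ+ × ℕ+)) : Set (ℕ+ × ℕ+) :=
  (fun p : ℕ+ × ℕ+ => (Equiv.swap k (k + 1) p.1, p.2)) '' D

/-- One step `D' = s_k D`: delete the border cell `(k, j)` of a column witnessing a
descent at `k`, then swap rows `k` and `k+1`. -/
def Step (k : ℕ+) (D D' : Set (ℕ+ × ℕ+)) : Prop :=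
  ∃ j : ℕ+, IsDescentCol D k j ∧ D' = swapRows k (D \ {(k, j)})

/-- Auxiliary predicate: applying the listed steps in order reduces `D` to `∅`. -/
def ReducesToEmpty : Set (ℕ+ × ℕ+) → List ℕ+ → Prop
  | D, [] => D = ∅
  | D, i :: rest => ∃ D', Step i D D' ∧ ReducesToEmpty D' rest

/-- `(i_1, …, i_ℓ)` is a reduced word for `D` if `s_{i_1} ⋯ s_{i_ℓ} D = ∅`,
i.e. applying `s_{i_ℓ}` first, then `s_{i_{ℓ-1}}`, etc., reduces `D` to `∅`. -/
def IsReducedWord (D : Set (ℕ+ × ℕ+)) (word : List ℕ+) : Prop :=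
  ReducesToEmpty D word.reverse

lemma swap_single (r c k : ℕ+) :
    swapRows k {(r, c)} = {(Equiv.swap k (k+1) r, c)} := by
  unfold swapRows; rw [Set.image_singleton]

lemma step_single (r c : ℕ+) (hr : r = 1 ∨ (r = 2 ∧ 2 ≤ c)) (k : ℕ+) (D' : Set (ℕ+ × ℕ+)) :
    Step k ({(r, c)} : Set (ℕ+ × ℕ+)) D' ↔ k = r ∧ D' = ∅ := by
  constructor
  · rintro ⟨j, ⟨hm, _, _⟩, hD'⟩
    rw [Set.mem_singleton_iff, Prod.mk.injEq] at hm
    obtain ⟨hk, hj⟩ := hm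
    subst hk; subst hj
    refine ⟨rfl, ?_⟩
    rw [hD', Set.diff_self]
    unfold swapRows; rw [Set.image_empty]
  · rintro ⟨hk, hD'⟩
    subst hk
    refine ⟨c, ⟨rfl, ?_, ?_⟩, ?_⟩
    · intro i hi
      rw [Set.mem_singleton_iff, Prod.mk.injEq] at hi
      exact le_of_eq hi.1
    · intro j' hj'
      left
      intro h
      rw [Set.mem_singleton_iff, Prod.mk.injEq] at h
      exact absurd h.2 hj'
    · rw [hD', Set.diff_self]
      unfold swapRows; rw [Set.image_empty]

lemma step_empty (k : ℕ+) (D' : Set (ℕ+ × ℕ+)) : ¬ Step k ∅ D' := by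
  rintro ⟨j, ⟨hm, _⟩, _⟩; exact hm

lemma D0_diff1 :
    (({((1 : ℕ+), (1 : ℕ+)), ((2 : ℕ+), (2 : ℕ+))} : Set (ℕ+ × ℕ+)) \ {(1, 1)})
      = {((2:ℕ+), (2:ℕ+))} := by
  ext ⟨a, b⟩
  simp only [Set.mem_diff, Set.mem_insert_iff, Set.mem_singleton_iff, Prod.mk.injEq]
  constructor
  · rintro ⟨h1 | h2, h⟩
    · exact absurd h1 h
    · exact h2
  · rintro ⟨ha, hb⟩
    subst ha; subst hb
    exact ⟨Or.inr ⟨rfl, rfl⟩, by rintro ⟨h, -⟩; exact absurd h (by decide)⟩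

lemma D0_diff2 :
    (({((1 : ℕ+), (1 : ℕ+)), ((2 : ℕ+), (2 : ℕ+))} : Set (ℕ+ × ℕ+)) \ {(2, 2)})
      = {((1:ℕ+), (1:ℕ+))} := by
  ext ⟨a, b⟩
  simp only [Set.mem_diff, Set.mem_insert_iff, Set.mem_singleton_iff, Prod.mk.injEq]
  constructor
  · rintro ⟨h1 | h2, h⟩
    · exact h1
    · exact absurd h2 h
  · rintro ⟨ha, hb⟩
    subst ha; subst hb
    exact ⟨Or.inl ⟨rfl, rfl⟩, by rintro ⟨h, -⟩; exact absurd h (by decide)⟩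

lemma step_D0 (k : ℕ+) (D' : Set (ℕ+ × ℕ+)) :
    Step k ({((1 : ℕ+), (1 : ℕ+)), ((2 : ℕ+), (2 : ℕ+))} : Set (ℕ+ × ℕ+)) D' ↔
      (k = 1 ∧ D' = {((1:ℕ+), (2:ℕ+))}) ∨ (k = 2 ∧ D' = {((1:ℕ+), (1:ℕ+))}) := by
  have hswap12 : Equiv.swap (1:ℕ+) (1+1) 2 = 1 := by
    rw [show ((1:ℕ+)+1 = 2) from rfl, Equiv.swap_apply_right]
  have hswap21 : Equiv.swap (2:ℕ+) (2+1) 1 = 1 := by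
    apply Equiv.swap_apply_of_ne_of_ne <;> decide
  constructor
  · rintro ⟨j, ⟨hm, _, _⟩, hD'⟩
    rw [Set.mem_insert_iff, Set.mem_singleton_iff, Prod.mk.injEq, Prod.mk.injEq] at hm
    rcases hm with ⟨hk, hj⟩ | ⟨hk, hj⟩ <;> subst hk <;> subst hj
    · left
      refine ⟨rfl, ?_⟩
      rw [hD', D0_diff1, swap_single, hswap12]
    · right
      refine ⟨rfl, ?_⟩
      rw [hD', D0_diff2, swap_single, hswap21]
  · rintro (⟨hk, hD'⟩ | ⟨hk, hD'⟩) <;> subst hk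
    · refine ⟨1, ⟨Or.inl rfl, ?_, ?_⟩, ?_⟩
      · intro i hi
        simp only [Set.mem_insert_iff, Set.mem_singleton_iff, Prod.mk.injEq] at hi
        rcases hi with h | h
        · exact le_of_eq h.1
        · exact absurd h.2 (by decide)
      · intro j' hj'
        left
        intro h
        simp only [Set.mem_insert_iff, Set.mem_singleton_iff, Prod.mk.injEq] at h
        rcases h with h | h
        · exact absurd h.2 hj'
        · exact absurd h.1 (by decide)
      · rw [hD', D0_diff1, swap_single, hswap12]
    · refine ⟨2, ⟨Or.inr rfl, ?_, ?_⟩, ?_⟩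
      · intro i hi
        simp only [Set.mem_insert_iff, Set.mem_singleton_iff, Prod.mk.injEq] at hi
        rcases hi with h | h
        · exact absurd h.2 (by decide)
        · exact le_of_eq h.1
      · intro j' hj'
        left
        intro h
        simp only [Set.mem_insert_iff, Set.mem_singleton_iff, Prod.mk.injEq] at h
        rcases h with h | h
        · exact absurd h.1 (by decide)
        · exact absurd h.2 hj'
      · rw [hD', D0_diff2, swap_single, hswap21]

lemma red_empty (l : List ℕ+) : ReducesToEmpty ∅ l ↔ l = [] := by
  cases l with
  | nil => simp [ReducesToEmpty]
  | cons i rest =>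
    simp only [ReducesToEmpty]
    constructor
    · rintro ⟨D', h, _⟩; exact absurd h (step_empty i D')
    · intro h; exact absurd h (by simp)

lemma red_single (r c : ℕ+) (hr : r = 1 ∨ (r = 2 ∧ 2 ≤ c)) (l : List ℕ+) :
    ReducesToEmpty ({(r, c)} : Set (ℕ+ × ℕ+)) l ↔ l = [r] := by
  cases l with
  | nil =>
    simp only [ReducesToEmpty]
    constructor
    · intro h
      exact absurd (h ▸ Set.mem_singleton (r, c)) (Set.notMem_empty _)
    · intro h; exact absurd h (by simp)
  | cons i rest =>
    simp only [ReducesToEmpty]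
    constructor
    · rintro ⟨D', hs, hrest⟩
      rw [step_single r c hr] at hs
      obtain ⟨hi, hD'⟩ := hs
      subst hD'
      rw [red_empty] at hrest
      rw [hi, hrest]
    · intro h
      rw [List.cons.injEq] at h
      obtain ⟨hi, hrest⟩ := h
      exact ⟨∅, (step_single r c hr i ∅).mpr ⟨hi, rfl⟩, by rw [hrest]; rfl⟩

lemma red_D0 (l : List ℕ+) :
    ReducesToEmpty ({((1 : ℕ+), (1 : ℕ+)), ((2 : ℕ+), (2 : ℕ+))} : Set (ℕ+ × ℕ+)) l ↔
      l = [1, 1] ∨ l = [2, 1] := by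
  cases l with
  | nil =>
    simp only [ReducesToEmpty]
    constructor
    · intro h
      exact absurd (h ▸ Set.mem_insert _ _) (Set.notMem_empty _)
    · rintro (h | h) <;> exact absurd h (by simp)
  | cons i rest =>
    simp only [ReducesToEmpty]
    constructor
    · rintro ⟨D', hs, hrest⟩
      rw [step_D0] at hs
      rcases hs with ⟨hi, hD'⟩ | ⟨hi, hD'⟩ <;> subst hD'
      · rw [red_single 1 2 (Or.inl rfl)] at hrest
        left; rw [hi, hrest]
      · rw [red_single 1 1 (Or.inl rfl)] at hrest
        right; rw [hi, hrest]
    · rintro (h | h) <;> rw [List.cons.injEq] at h <;> obtain ⟨hi, hrest⟩ := h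
      · exact ⟨{((1:ℕ+), (2:ℕ+))}, (step_D0 i _).mpr (Or.inl ⟨hi, rfl⟩),
          (red_single 1 2 (Or.inl rfl) rest).mpr hrest⟩
      · exact ⟨{((1:ℕ+), (1:ℕ+))}, (step_D0 i _).mpr (Or.inr ⟨hi, rfl⟩),
          (red_single 1 1 (Or.inl rfl) rest).mpr hrest⟩

/-- The reduced words of the diagram `D = [{1}, {2}]` (a box at `(1,1)` and a box at
`(2,2)`) are exactly `(1,1)` and `(1,2)`; in particular reduced words of a diagram
need not be connected under commutation and braid moves. -/
theorem stmt17 (word : List ℕ+) :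
    IsReducedWord ({((1 : ℕ+), (1 : ℕ+)), ((2 : ℕ+), (2 : ℕ+))} : Set (ℕ+ × ℕ+)) word ↔
      word = [(1 : ℕ+), (1 : ℕ+)] ∨ word = [(1 : ℕ+), (2 : ℕ+)] := by
  rw [IsReducedWord, red_D0]
  constructor
  · rintro (h | h)
    · left; rw [← List.reverse_reverse word, h]; rfl
    · right; rw [← List.reverse_reverse word, h]; rfl
  · rintro (h | h) <;> subst h <;> simp
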